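/- arXiv:2203.11255 — 2 statements merged into one kernel-verified Lean document; each statement's English description precedes it below -/
import Mathlib

section
/- Let $B_F = \{k \in \mathbb{Z}^3 : |k| \le k_F\}$ and $N = |B_F|$. Then the sum of $|k|^2$ over $k \in B_F$ is bounded above and below by positive constants times $N^{5/3}$, i.e., there exist constants $c, C > 0$ (independent of $k_F \ge 1$) such that $c N^{5/3} \le \sum_{k \in B_F} |k|^2 \le C N^{5/3}$. -/
/-!
The Fermi ball of radius `r ≥ 1` contains the lattice cube `[-m, m]³` with `m = ⌊r/2⌋` and lies
in the cube `[-⌊r⌋, ⌊r⌋]³`, so `N ≍ r³`. Every point has `|k|² ≤ r²`, so `∑ |k|² ≤ N r²`, while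
the inner cube alone contributes `m (m+1) (2m+1)³ ≍ r⁵` (for `m = 0` the point `(1,0,0)`
suffices). Hence `∑ |k|² ≍ r⁵ ≍ N^{5/3}`.
-/

open Finset

namespace Real

lemma pow_rpow_div_natCast {x : ℝ} (hx : 0 ≤ x) {n : ℕ} (hn : n ≠ 0) (a : ℕ) :
    (x ^ n) ^ ((a : ℝ) / n) = x ^ a := by
  rw [← rpow_natCast x n, ← rpow_mul hx, mul_div_cancel₀ _ (by exact_mod_cast hn),
    rpow_natCast]

lemma rpow_div_natCast_le_pow {x y : ℝ} (hx : 0 ≤ x) (hy : 0 ≤ y) {n : ℕ} (hn : n ≠ 0)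
    (a : ℕ) (h : x ≤ y ^ n) : x ^ ((a : ℝ) / n) ≤ y ^ a := by
  calc x ^ ((a : ℝ) / n) ≤ (y ^ n) ^ ((a : ℝ) / n) := by gcongr
    _ = y ^ a := pow_rpow_div_natCast hy hn a

lemma pow_le_rpow_div_natCast {x y : ℝ} (hx : 0 ≤ x) {n : ℕ} (hn : n ≠ 0) (a : ℕ)
    (h : x ^ n ≤ y) : x ^ a ≤ y ^ ((a : ℝ) / n) := by
  calc x ^ a = (x ^ n) ^ ((a : ℝ) / n) := (pow_rpow_div_natCast hx hn a).symm
    _ ≤ y ^ ((a : ℝ) / n) := by gcongr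

end Real

namespace FermiBall

def sqNorm (k : ℤ × ℤ × ℤ) : ℝ := (k.1 : ℝ) ^ 2 + (k.2.1 : ℝ) ^ 2 + (k.2.2 : ℝ) ^ 2

lemma sqNorm_nonneg (k : ℤ × ℤ × ℤ) : 0 ≤ sqNorm k := by
  unfold sqNorm; positivity

lemma sum_sqNorm_product (I : Finset ℤ) :
    ∑ k ∈ I ×ˢ I ×ˢ I, sqNorm k = 3 * (#I : ℝ) ^ 2 * ∑ j ∈ I, (j : ℝ) ^ 2 := by
  simp only [sqNorm, sum_product, sum_add_distrib, sum_const, card_product, nsmul_eq_mul,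
    mul_sum]
  push_cast
  rw [← sum_add_distrib, ← sum_add_distrib]
  refine sum_congr rfl fun j _ => ?_
  ring

lemma card_Icc_neg_self (m : ℕ) : #(Icc (-(m : ℤ)) m) = 2 * m + 1 := by
  rw [Int.card_Icc]; omega

lemma sum_Icc_neg_self_sq (m : ℕ) :
    ∑ j ∈ Icc (-(m : ℤ)) m, (j : ℝ) ^ 2 = m * (m + 1) * (2 * m + 1) / 3 := by
  induction m with
  | zero => simp
  | succ n ih =>
    have hIcc : Icc (-((n + 1 : ℕ) : ℤ)) (n + 1 : ℕ) =
        insert ((n : ℤ) + 1) (insert (-((n : ℤ) + 1)) (Icc (-(n : ℤ)) n)) := by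
      ext x; simp only [mem_Icc, mem_insert]; omega
    rw [hIcc, sum_insert (by simp; omega), sum_insert (by simp), ih]
    push_cast
    ring

noncomputable def latticeCube (m : ℕ) : Finset (ℤ × ℤ × ℤ) :=
  Icc (-(m : ℤ)) m ×ˢ Icc (-(m : ℤ)) m ×ˢ Icc (-(m : ℤ)) m

lemma card_latticeCube (m : ℕ) : #(latticeCube m) = (2 * m + 1) ^ 3 := by
  simp only [latticeCube, card_product, card_Icc_neg_self]; ring

lemma sum_sqNorm_latticeCube (m : ℕ) :
    ∑ k ∈ latticeCube m, sqNorm k = m * (m + 1) * (2 * m + 1) ^ 3 := by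
  rw [latticeCube, sum_sqNorm_product, sum_Icc_neg_self_sq, card_Icc_neg_self]
  push_cast
  ring

def IsLatticeBall (S : Finset (ℤ × ℤ × ℤ)) (r : ℝ) : Prop :=
  ∀ k, k ∈ S ↔ sqNorm k ≤ r ^ 2

namespace IsLatticeBall

variable {r : ℝ} {S : Finset (ℤ × ℤ × ℤ)}

lemma latticeCube_subset (hS : IsLatticeBall S r) {m : ℕ} (hm : 3 * (m : ℝ) ^ 2 ≤ r ^ 2) :
    latticeCube m ⊆ S := by
  intro k hk
  simp only [latticeCube, mem_product, mem_Icc] at hk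
  have hcoord : ∀ x : ℤ, -(m : ℤ) ≤ x ∧ x ≤ m → (x : ℝ) ^ 2 ≤ (m : ℝ) ^ 2 :=
    fun x hx => sq_le_sq' (by exact_mod_cast hx.1) (by exact_mod_cast hx.2)
  rw [hS, sqNorm]
  linarith [hcoord _ hk.1, hcoord _ hk.2.1, hcoord _ hk.2.2]

lemma subset_latticeCube (hS : IsLatticeBall S r) (hr : 0 ≤ r) :
    S ⊆ latticeCube ⌊r⌋₊ := by
  intro k hk
  rw [hS, sqNorm] at hk
  have hcoord (x : ℤ) (hx : (x : ℝ) ^ 2 ≤ r ^ 2) : -(⌊r⌋₊ : ℤ) ≤ x ∧ x ≤ ⌊r⌋₊ := by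
    have habs : x.natAbs ≤ ⌊r⌋₊ := Nat.le_floor <| by
      rw [Nat.cast_natAbs, Int.cast_abs]; exact abs_le_of_sq_le_sq hx hr
    omega
  simp only [latticeCube, mem_product, mem_Icc]
  exact ⟨hcoord _ (by nlinarith [sq_nonneg (k.2.1 : ℝ), sq_nonneg (k.2.2 : ℝ)]),
    hcoord _ (by nlinarith [sq_nonneg (k.1 : ℝ), sq_nonneg (k.2.2 : ℝ)]),
    hcoord _ (by nlinarith [sq_nonneg (k.1 : ℝ), sq_nonneg (k.2.1 : ℝ)])⟩

lemma latticeCube_floor_half_subset (hS : IsLatticeBall S r) (hr : 0 ≤ r) :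
    latticeCube ⌊r / 2⌋₊ ⊆ S := by
  refine hS.latticeCube_subset ?_
  have hfl : (⌊r / 2⌋₊ : ℝ) ≤ r / 2 := Nat.floor_le (by linarith)
  nlinarith [Nat.cast_nonneg (α := ℝ) ⌊r / 2⌋₊]

lemma card_le_pow_three (hS : IsLatticeBall S r) (hr : 1 ≤ r) : (#S : ℝ) ≤ (3 * r) ^ 3 := by
  have hcard := card_le_card (hS.subset_latticeCube (by linarith))
  rw [card_latticeCube] at hcard
  have hfl : (⌊r⌋₊ : ℝ) ≤ r := Nat.floor_le (by linarith)
  calc (#S : ℝ) ≤ (2 * ⌊r⌋₊ + 1) ^ 3 := by exact_mod_cast hcard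
    _ ≤ (3 * r) ^ 3 := by gcongr; linarith

lemma pow_three_le_card (hS : IsLatticeBall S r) (hr : 0 ≤ r) : r ^ 3 ≤ 8 * #S := by
  have hfl : r / 2 < ⌊r / 2⌋₊ + 1 := Nat.lt_floor_add_one _
  have hcard := card_le_card (hS.latticeCube_floor_half_subset hr)
  generalize ⌊r / 2⌋₊ = m at hfl hcard
  rw [card_latticeCube] at hcard
  calc r ^ 3 ≤ (2 * (2 * (m : ℝ) + 1)) ^ 3 := by
        gcongr; linarith [Nat.cast_nonneg (α := ℝ) m]
    _ = 8 * (2 * (m : ℝ) + 1) ^ 3 := by ring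
    _ ≤ 8 * #S := by gcongr; exact_mod_cast hcard

lemma sum_sqNorm_le (hS : IsLatticeBall S r) : ∑ k ∈ S, sqNorm k ≤ #S * r ^ 2 := by
  simpa using sum_le_card_nsmul S sqNorm (r ^ 2) fun k hk => (hS k).1 hk

lemma pow_five_le_sum_sqNorm (hS : IsLatticeBall S r) (hr : 1 ≤ r) :
    r ^ 5 ≤ 64 * ∑ k ∈ S, sqNorm k := by
  have hfl : r / 2 < ⌊r / 2⌋₊ + 1 := Nat.lt_floor_add_one _
  have hsub := hS.latticeCube_floor_half_subset (by linarith)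
  generalize ⌊r / 2⌋₊ = m at hfl hsub
  have hcube : ((m : ℝ) + 1) ^ 5 ≤ 2 * ∑ k ∈ S, sqNorm k := by
    rcases Nat.eq_zero_or_pos m with hm | hm
    · have hone : sqNorm (1, 0, 0) = 1 := by norm_num [sqNorm]
      have hmem : ((1, 0, 0) : ℤ × ℤ × ℤ) ∈ S := by rw [hS, hone]; nlinarith
      have hle := single_le_sum (fun k _ => sqNorm_nonneg k) hmem
      rw [hm, Nat.cast_zero, zero_add, one_pow]
      linarith
    · have hsum := sum_le_sum_of_subset_of_nonneg hsub fun k _ _ => sqNorm_nonneg k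
      rw [sum_sqNorm_latticeCube] at hsum
      have hm1 : (1 : ℝ) ≤ m := by exact_mod_cast hm
      calc ((m : ℝ) + 1) ^ 5 = ((m : ℝ) + 1) * (m + 1) * (m + 1) ^ 3 := by ring
        _ ≤ (2 * (m : ℝ)) * (m + 1) * (2 * m + 1) ^ 3 := by gcongr <;> linarith
        _ ≤ 2 * ∑ k ∈ S, sqNorm k := by linarith
  calc r ^ 5 ≤ (2 * ((m : ℝ) + 1)) ^ 5 := by gcongr; linarith
    _ = 32 * ((m : ℝ) + 1) ^ 5 := by ring
    _ ≤ 64 * ∑ k ∈ S, sqNorm k := by linarith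

end IsLatticeBall

end FermiBall

/-- Kinetic energy of the free Fermi ball: the sum of `|k|^2` over lattice points
`k ∈ ℤ³` with `|k| ≤ k_F` is comparable to `N^(5/3)` where `N` is the number of
lattice points in the Fermi ball. -/
theorem fermi_ball_kinetic_energy :
    ∃ c C : ℝ, 0 < c ∧ 0 < C ∧
      ∀ kF : ℝ, 1 ≤ kF →
        ∀ S : Finset (ℤ × ℤ × ℤ),
          (∀ k : ℤ × ℤ × ℤ, k ∈ S ↔
            ((k.1 : ℝ) ^ 2 + (k.2.1 : ℝ) ^ 2 + (k.2.2 : ℝ) ^ 2 ≤ kF ^ 2)) →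
          c * (S.card : ℝ) ^ ((5 : ℝ) / 3) ≤
              ∑ k ∈ S, ((k.1 : ℝ) ^ 2 + (k.2.1 : ℝ) ^ 2 + (k.2.2 : ℝ) ^ 2) ∧
            ∑ k ∈ S, ((k.1 : ℝ) ^ 2 + (k.2.1 : ℝ) ^ 2 + (k.2.2 : ℝ) ^ 2) ≤
              C * (S.card : ℝ) ^ ((5 : ℝ) / 3) := by
  -- `15552 = 3⁵ · 64`, from `N ≤ (3 kF)³` and `kF⁵ ≤ 64 ∑ |k|²`
  refine ⟨1 / 15552, 4, by norm_num, by norm_num, fun kF hkF S hS => ?_⟩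
  have hball : FermiBall.IsLatticeBall S kF := hS
  change _ ≤ ∑ k ∈ S, FermiBall.sqNorm k ∧ ∑ k ∈ S, FermiBall.sqNorm k ≤ _
  have hN : 0 ≤ (#S : ℝ) := Nat.cast_nonneg _
  have hN_le : (#S : ℝ) ^ ((5 : ℝ) / 3) ≤ (3 * kF) ^ 5 := by
    simpa using Real.rpow_div_natCast_le_pow hN (by linarith) three_ne_zero 5
      (hball.card_le_pow_three hkF)
  have hkF_sq : kF ^ 2 ≤ 4 * (#S : ℝ) ^ ((2 : ℝ) / 3) := by
    have h8 : (8 : ℝ) ^ ((2 : ℝ) / 3) = 4 := by norm_num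
    simpa [Real.mul_rpow, h8] using Real.pow_le_rpow_div_natCast (by linarith) three_ne_zero 2
      (hball.pow_three_le_card (by linarith))
  constructor
  · linarith [hball.pow_five_le_sum_sqNorm hkF]
  · calc ∑ k ∈ S, FermiBall.sqNorm k ≤ #S * kF ^ 2 := hball.sum_sqNorm_le
      _ ≤ #S * (4 * (#S : ℝ) ^ ((2 : ℝ) / 3)) := by gcongr
      _ = 4 * (#S : ℝ) ^ ((5 : ℝ) / 3) := by
        rw [show (5 : ℝ) / 3 = 1 + 2 / 3 by norm_num, Real.rpow_one_add' hN (by norm_num)]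
        ring
end

section
/- Let $D, W, \widetilde{W}$ be real symmetric $n \times n$ matrices with $D + W - \widetilde{W}$ and $D + W + \widetilde{W}$ positive definite. Define $E := [(D+W-\widetilde{W})^{1/2}(D+W+\widetilde{W})(D+W-\widetilde{W})^{1/2}]^{1/2}$ and $S := (D+W-\widetilde{W})^{1/2}E^{-1/2}$. Then $S$ is invertible and $S^{\intercal}(D+W+\widetilde{W})S = E$ and $S^{-1}(D+W-\widetilde{W})(S^{-1})^{\intercal} = E$; i.e., $S$ simultaneously congruence-diagonalizes the two positive matrices $D+W\pm\widetilde{W}$ to the same matrix $E$. -/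
/-!
Write `R = (D + W - W̃)^{1/2}` and `F = E^{1/2}`, both symmetric and invertible, so that
`S = R F⁻¹`. Then `Sᵀ (D + W + W̃) S = F⁻¹ (R (D + W + W̃) R) F⁻¹ = F⁻¹ F⁴ F⁻¹ = F² = E` and
`S⁻¹ (D + W - W̃) S⁻ᵀ = F R⁻¹ R² R⁻¹ F = F² = E`.
-/

open Matrix

open scoped ComplexOrder in
noncomputable def Matrix.PosSemidef.sqrt {n : Type*} [Fintype n] [DecidableEq n] {𝕜 : Type*}
    [RCLike 𝕜] {A : Matrix n n 𝕜} (hA : A.PosSemidef) : Matrix n n 𝕜 :=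
  hA.1.eigenvectorUnitary.1 * diagonal ((↑) ∘ (√·) ∘ hA.1.eigenvalues) *
  (star hA.1.eigenvectorUnitary : Matrix n n 𝕜)

namespace Matrix

section Sqrt

open scoped ComplexOrder

variable {n 𝕜 : Type*} [Fintype n] [DecidableEq n] [RCLike 𝕜] {A : Matrix n n 𝕜}

lemma PosSemidef.isHermitian_sqrt (hA : A.PosSemidef) : hA.sqrt.IsHermitian := by
  have := isHermitian_mul_mul_conjTranspose (hA.1.eigenvectorUnitary : Matrix n n 𝕜)
    (isHermitian_diagonal_of_self_adjoint (RCLike.ofReal ∘ (√·) ∘ hA.1.eigenvalues : n → 𝕜)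
      (funext fun _ => RCLike.conj_ofReal _))
  rwa [← star_eq_conjTranspose] at this

lemma PosSemidef.sqrt_mul_self (hA : A.PosSemidef) : hA.sqrt * hA.sqrt = A := by
  have hdiag : diagonal (((↑) ∘ (√·) ∘ hA.1.eigenvalues) : n → 𝕜) *
      diagonal ((↑) ∘ (√·) ∘ hA.1.eigenvalues) = diagonal (RCLike.ofReal ∘ hA.1.eigenvalues) := by
    rw [diagonal_mul_diagonal]
    congr 1
    funext i
    simp only [Function.comp_apply, ← RCLike.ofReal_mul,
      Real.mul_self_sqrt (hA.eigenvalues_nonneg i)]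
  have hU : (star hA.1.eigenvectorUnitary : Matrix n n 𝕜) * hA.1.eigenvectorUnitary.1 = 1 :=
    Unitary.coe_star_mul_self _
  conv_rhs => rw [hA.1.spectral_theorem, Unitary.conjStarAlgAut_apply, ← hdiag]
  simp only [PosSemidef.sqrt, Matrix.mul_assoc]
  rw [← Matrix.mul_assoc (star hA.1.eigenvectorUnitary : Matrix n n 𝕜), hU, Matrix.one_mul]

lemma PosDef.isUnit_sqrt (hA : A.PosDef) : IsUnit hA.posSemidef.sqrt :=
  isUnit_of_mul_isUnit_left (hA.posSemidef.sqrt_mul_self ▸ hA.isUnit)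

end Sqrt

section Congruence

variable {n α : Type*} [Fintype n] [DecidableEq n] [CommRing α] {A B E F R : Matrix n n α}

lemma transpose_mul_mul_eq_of_mul_self_eq (hR : Rᵀ = R) (hF : Fᵀ = F) (hFu : IsUnit F)
    (hFF : F * F = E) (hEE : E * E = R * B * R) :
    (R * F⁻¹)ᵀ * B * (R * F⁻¹) = E := by
  have hFd : IsUnit F.det := (isUnit_iff_isUnit_det F).1 hFu
  rw [transpose_mul, transpose_nonsing_inv, hR, hF]
  calc F⁻¹ * R * B * (R * F⁻¹) = F⁻¹ * (R * B * R) * F⁻¹ := by simp only [Matrix.mul_assoc]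
    _ = F⁻¹ * F * (F * F) * (F * F⁻¹) := by rw [← hEE, ← hFF]; simp only [Matrix.mul_assoc]
    _ = E := by
      rw [nonsing_inv_mul F hFd, mul_nonsing_inv F hFd, Matrix.one_mul, Matrix.mul_one, hFF]

lemma inv_mul_mul_transpose_inv_eq_of_mul_self_eq (hR : Rᵀ = R) (hF : Fᵀ = F) (hRu : IsUnit R)
    (hFu : IsUnit F) (hRR : R * R = A) (hFF : F * F = E) :
    (R * F⁻¹)⁻¹ * A * ((R * F⁻¹)⁻¹)ᵀ = E := by
  have hRd : IsUnit R.det := (isUnit_iff_isUnit_det R).1 hRu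
  have hFd : IsUnit F.det := (isUnit_iff_isUnit_det F).1 hFu
  rw [Matrix.mul_inv_rev, nonsing_inv_nonsing_inv F hFd, transpose_mul, transpose_nonsing_inv, hR,
    hF]
  calc F * R⁻¹ * A * (R⁻¹ * F) = F * (R⁻¹ * R) * (R * R⁻¹) * F := by
        rw [← hRR]; simp only [Matrix.mul_assoc]
    _ = E := by
      rw [nonsing_inv_mul R hRd, mul_nonsing_inv R hRd, Matrix.mul_one, Matrix.mul_one, hFF]

end Congruence

end Matrix

theorem rpa_congruence_diagonalization_general {n : ℕ}
    (D W Wt : Matrix (Fin n) (Fin n) ℝ)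
    (h1 : (D + W - Wt).PosDef)
    (E : Matrix (Fin n) (Fin n) ℝ) (hE : E.PosDef)
    (hEsq : E * E = h1.posSemidef.sqrt * (D + W + Wt) * h1.posSemidef.sqrt)
    (S : Matrix (Fin n) (Fin n) ℝ)
    (hS : S = h1.posSemidef.sqrt * (hE.posSemidef.sqrt)⁻¹) :
    IsUnit S ∧ Sᵀ * (D + W + Wt) * S = E ∧ S⁻¹ * (D + W - Wt) * (S⁻¹)ᵀ = E := by
  subst hS
  have hR : (h1.posSemidef.sqrt)ᵀ = h1.posSemidef.sqrt := h1.posSemidef.isHermitian_sqrt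
  have hF : (hE.posSemidef.sqrt)ᵀ = hE.posSemidef.sqrt := hE.posSemidef.isHermitian_sqrt
  refine ⟨h1.isUnit_sqrt.mul (isUnit_nonsing_inv_iff.2 hE.isUnit_sqrt), ?_, ?_⟩
  · exact transpose_mul_mul_eq_of_mul_self_eq hR hF hE.isUnit_sqrt
      hE.posSemidef.sqrt_mul_self hEsq
  · exact inv_mul_mul_transpose_inv_eq_of_mul_self_eq hR hF h1.isUnit_sqrt hE.isUnit_sqrt
      h1.posSemidef.sqrt_mul_self hE.posSemidef.sqrt_mul_self

/-- Simultaneous congruence diagonalization underlying the Bogoliubov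
diagonalization of the RPA effective Hamiltonian: for real symmetric `D, W, W̃`
with `D + W ∓ W̃` positive definite, `E = [(D+W-W̃)^{1/2}(D+W+W̃)(D+W-W̃)^{1/2}]^{1/2}`
and `S = (D+W-W̃)^{1/2} E^{-1/2}`, the matrix `S` is invertible and
`Sᵀ (D+W+W̃) S = E` and `S⁻¹ (D+W-W̃) (S⁻¹)ᵀ = E`. -/
theorem rpa_congruence_diagonalization {n : ℕ}
    (D W Wt : Matrix (Fin n) (Fin n) ℝ)
    (hD : D.IsSymm) (hW : W.IsSymm) (hWt : Wt.IsSymm)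
    (h1 : (D + W - Wt).PosDef) (h2 : (D + W + Wt).PosDef)
    (E : Matrix (Fin n) (Fin n) ℝ) (hE : E.PosDef)
    (hEsq : E * E = h1.posSemidef.sqrt * (D + W + Wt) * h1.posSemidef.sqrt)
    (S : Matrix (Fin n) (Fin n) ℝ)
    (hS : S = h1.posSemidef.sqrt * (hE.posSemidef.sqrt)⁻¹) :
    IsUnit S ∧ Sᵀ * (D + W + Wt) * S = E ∧ S⁻¹ * (D + W - Wt) * (S⁻¹)ᵀ = E :=
  rpa_congruence_diagonalization_general D W Wt h1 E hE hEsq S hS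
end
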